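/- Let D be a probability distribution on the grid G_m × {0,1} where G_m = {0, 1/m, ..., 1}, with q(p) = E[y|p] and π_j = Pr[p = j/m], q_j = E[y | p = j/m]. Then sup over μ in [0,1] of E[max(q - μ, 0)·1[p ≤ μ] + max(μ - q, 0)·1[p > μ]] is at most max over i of (Σ_{j≤i} π_j·max(q_j - (i+1)/m, 0) + Σ_{j>i} π_j·max(i/m - q_j, 0)) + 1/m. Consequently, using the factor-2 approximation of CDL, CDL(D) ≤ 2·SCDL_m(D) + 2/m. -/
import Mathlib


open Finset

/-- Soft-binned calibration fixed decision loss at index `i`, for a distribution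
supported on the grid `{0, 1/m, ..., 1}` with bin weights `π` and conditional means `q`. -/
noncomputable def gSCFDL (m : ℕ) (π q : ℕ → ℝ) (i : ℕ) : ℝ :=
  ∑ j ∈ Finset.range (i + 1), π j * max (q j - ((i : ℝ) + 1) / m) 0
    + ∑ j ∈ Finset.Icc (i + 1) m, π j * max ((i : ℝ) / m - q j) 0

/-- `SCDL_m` for a grid-supported distribution. -/
noncomputable def gSCDLm (m : ℕ) (π q : ℕ → ℝ) : ℝ :=
  Finset.sup' (Finset.range (m + 1)) (Finset.nonempty_range_iff.mpr (Nat.succ_ne_zero m))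
    (gSCFDL m π q)

/-- `E[max(q - t, 0)·1[p ≤ t] + max(t - q, 0)·1[p > t]]` for the grid-supported
distribution with `Pr[p = j/m] = π_j` and `E[y | p = j/m] = q_j`. -/
noncomputable def gridLoss (m : ℕ) (π q : ℕ → ℝ) (t : ℝ) : ℝ :=
  ∑ j ∈ Finset.range (m + 1),
    π j * (if (j : ℝ) / m ≤ t then max (q j - t) 0 else max (t - q j) 0)

lemma gSCDLm_nonneg (m : ℕ) (π q : ℕ → ℝ) (hπ : ∀ j, 0 ≤ π j) :
    0 ≤ gSCDLm m π q := by
  have h0 : (0:ℝ) ≤ gSCFDL m π q 0 := by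
    unfold gSCFDL
    have h1 : (0:ℝ) ≤ ∑ j ∈ Finset.range (0 + 1), π j * max (q j - ((0 : ℝ) + 1) / m) 0 :=
      Finset.sum_nonneg fun j _ => mul_nonneg (hπ j) (le_max_right _ _)
    have h2 : (0:ℝ) ≤ ∑ j ∈ Finset.Icc (0 + 1) m, π j * max ((0 : ℝ) / m - q j) 0 :=
      Finset.sum_nonneg fun j _ => mul_nonneg (hπ j) (le_max_right _ _)
    linarith
  exact h0.trans (Finset.le_sup' _ (by simp))

lemma gridLoss_le (m : ℕ) (hm : 0 < m) (π q : ℕ → ℝ)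
    (hπ : ∀ j, 0 ≤ π j) (hsum : ∑ j ∈ Finset.range (m + 1), π j = 1)
    (t : ℝ) (ht : t ∈ Set.Icc (0:ℝ) 1) :
    gridLoss m π q t ≤ gSCDLm m π q + 1 / m := by
  obtain ⟨ht0, ht1⟩ := ht
  have hm' : (0:ℝ) < m := by exact_mod_cast hm
  set i := ⌊t * m⌋₊ with hidef
  have htm : 0 ≤ t * m := mul_nonneg ht0 hm'.le
  have hi : i ≤ m := by
    have : ⌊t * (m:ℝ)⌋₊ ≤ ⌊(m:ℝ)⌋₊ := Nat.floor_mono (by nlinarith)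
    simpa using this
  have h1 : (i:ℝ) / m ≤ t := by
    have := Nat.floor_le htm
    rw [div_le_iff₀ hm']; exact this
  have h2 : t < ((i:ℝ) + 1) / m := by
    have := Nat.lt_floor_add_one (t * m)
    rw [lt_div_iff₀ hm']; exact this
  have key : gridLoss m π q t ≤ gSCFDL m π q i + 1 / m := by
    have hsplit : Finset.range (m + 1) = Finset.range (i + 1) ∪ Finset.Icc (i + 1) m := by
      ext x; simp [Nat.lt_succ_iff]; omega
    have hdisj : Disjoint (Finset.range (i + 1)) (Finset.Icc (i + 1) m) := by
      rw [Finset.disjoint_left]; intro a ha hb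
      simp [Nat.lt_succ_iff] at ha hb; omega
    have step : gridLoss m π q t ≤
        ∑ j ∈ Finset.range (m + 1),
          (π j * (if j ≤ i then max (q j - ((i:ℝ) + 1) / m) 0
            else max ((i:ℝ) / m - q j) 0) + π j / m) := by
      unfold gridLoss
      apply Finset.sum_le_sum
      intro j hj
      by_cases hji : j ≤ i
      · have hc : (j:ℝ) / m ≤ t := by
          refine le_trans ?_ h1
          apply div_le_div_of_nonneg_right ?_ hm'.le  <;> try exact_mod_cast hji
        rw [if_pos hc, if_pos hji]
        have hb : max (q j - t) 0 ≤ max (q j - ((i:ℝ) + 1) / m) 0 + 1 / m := by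
          apply max_le
          · have : q j - t ≤ q j - ((i:ℝ) + 1) / m + 1 / m := by
              have : ((i:ℝ) + 1) / m - 1 / m = (i:ℝ) / m := by ring
              linarith [h1]
            linarith [le_max_left (q j - ((i:ℝ) + 1) / m) (0:ℝ)]
          · have : (0:ℝ) ≤ 1 / m := by positivity
            linarith [le_max_right (q j - ((i:ℝ) + 1) / m) (0:ℝ)]
        calc π j * max (q j - t) 0 ≤ π j * (max (q j - ((i:ℝ) + 1) / m) 0 + 1 / m) :=
              mul_le_mul_of_nonneg_left hb (hπ j)
          _ = π j * max (q j - ((i:ℝ) + 1) / m) 0 + π j * (1 / m) := by ring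
          _ = π j * max (q j - ((i:ℝ) + 1) / m) 0 + π j / m := by ring
      · have hji' : i + 1 ≤ j := by omega
        have hc : ¬ (j:ℝ) / m ≤ t := by
          push_neg
          refine lt_of_lt_of_le h2 ?_
          apply div_le_div_of_nonneg_right ?_ hm'.le
          exact_mod_cast hji'
        rw [if_neg hc, if_neg hji]
        have hb : max (t - q j) 0 ≤ max ((i:ℝ) / m - q j) 0 + 1 / m := by
          apply max_le
          · have : t - q j ≤ (i:ℝ) / m - q j + 1 / m := by
              have : ((i:ℝ) + 1) / m = (i:ℝ) / m + 1 / m := by ring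
              linarith [h2.le]
            linarith [le_max_left ((i:ℝ) / m - q j) (0:ℝ)]
          · have : (0:ℝ) ≤ 1 / m := by positivity
            linarith [le_max_right ((i:ℝ) / m - q j) (0:ℝ)]
        calc π j * max (t - q j) 0 ≤ π j * (max ((i:ℝ) / m - q j) 0 + 1 / m) :=
              mul_le_mul_of_nonneg_left hb (hπ j)
          _ = π j * max ((i:ℝ) / m - q j) 0 + π j / m := by ring
    refine step.trans ?_
    rw [Finset.sum_add_distrib]
    have hA : ∑ j ∈ Finset.range (m + 1),
        π j * (if j ≤ i then max (q j - ((i:ℝ) + 1) / m) 0 else max ((i:ℝ) / m - q j) 0)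
        = gSCFDL m π q i := by
      rw [hsplit, Finset.sum_union hdisj]
      unfold gSCFDL
      congr 1
      · apply Finset.sum_congr rfl
        intro j hj
        rw [if_pos (by simpa [Nat.lt_succ_iff] using hj)]
      · apply Finset.sum_congr rfl
        intro j hj
        simp only [Finset.mem_Icc] at hj
        rw [if_neg (by omega)]
    have hB : ∑ j ∈ Finset.range (m + 1), π j / m = 1 / m := by
      rw [← Finset.sum_div, hsum]
    rw [hA, hB]
  refine key.trans ?_
  have : gSCFDL m π q i ≤ gSCDLm m π q :=
    Finset.le_sup' _ (by simp [Nat.lt_succ_iff, hi])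
  linarith

/-- for a distribution supported on the grid `{0,1/m,...,1}`,
`sup_{t ∈ [0,1]} E[max(q-t,0)·1[p≤t] + max(t-q,0)·1[p>t]] ≤ SCDL_m(D) + 1/m`.
Consequently (via the factor-2 approximation of CDL), any `CDL ≤ 2·sup`
satisfies `CDL ≤ 2·SCDL_m(D) + 2/m`. -/
theorem gridLoss_sup_le (m : ℕ) (hm : 0 < m) (π q : ℕ → ℝ)
    (hπ : ∀ j, 0 ≤ π j) (hsum : ∑ j ∈ Finset.range (m + 1), π j = 1)
    (hq : ∀ j ≤ m, q j ∈ Set.Icc (0:ℝ) 1) :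
    sSup (gridLoss m π q '' Set.Icc 0 1) ≤ gSCDLm m π q + 1 / m
    ∧ ∀ CDL : ℝ, CDL ≤ 2 * sSup (gridLoss m π q '' Set.Icc 0 1) →
        CDL ≤ 2 * gSCDLm m π q + 2 / m := by
  have hm' : (0:ℝ) < m := by exact_mod_cast hm
  have hsup : sSup (gridLoss m π q '' Set.Icc 0 1) ≤ gSCDLm m π q + 1 / m := by
    apply Real.sSup_le
    · rintro x ⟨t, ht, rfl⟩
      exact gridLoss_le m hm π q hπ hsum t ht
    · have := gSCDLm_nonneg m π q hπ
      have : (0:ℝ) ≤ 1 / m := by positivity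
      linarith [gSCDLm_nonneg m π q hπ]
  refine ⟨hsup, fun CDL hCDL => ?_⟩
  have h2m : (2:ℝ) / m = 2 * (1 / m) := by ring
  nlinarith [hsup]
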